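/- arXiv:2410.12151 — 2 statements merged into one kernel-verified Lean document; each statement's English description precedes it below -/
import Mathlib

section
/- Let B be a real p×p matrix such that P B Pᵀ is strictly lower triangular for some permutation matrix P (so I − B is invertible), let D be a diagonal p×p matrix with strictly positive diagonal entries, set Σ = (I − B)⁻¹ D (I − B)⁻ᵀ, and let L be a lower triangular matrix with strictly positive diagonal entries satisfying L Lᵀ = Σ. Fix an index r and a nonzero real δ, and set ξ = L⁻¹ (I − B)⁻¹ (δ • e_r), where e_r is the r-th standard basis vector. Then: (a) ξ ≠ 0; and (b) if ξ has exactly one nonzero coordinate, then that coordinate is the r-th one (i.e., ξ_r ≠ 0 and ξ_j = 0 for all j ≠ r). -/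
open Matrix

/-!
Write `M = 1 - B`. Up to the permutation `σ`, `M` is lower unitriangular, so `M⁻¹` has unit
diagonal, and `Σ⁻¹ = Mᵀ D⁻¹ M`. Hence `L ξ = δ M⁻¹ e_r` and `L⁻ᵀ ξ = Σ⁻¹ M⁻¹ (δ e_r) =
δ Mᵀ D⁻¹ e_r` both have nonzero `r`-th coordinate (`δ` and `δ / D_rr`). The first gives
`ξ ≠ 0`. If `ξ = c e_i`, these coordinates are `L_ri c` and `(L⁻¹)_ir c`; since `L` and `L⁻¹`
are lower triangular, the first forces `i ≤ r` and the second `r ≤ i`.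
-/

namespace Matrix

variable {m R K : Type*}

section LowerTriangular

variable [Fintype m] [DecidableEq m] [LinearOrder m] [CommRing R] {M : Matrix m m R}

theorem IsLowerTriangular.isUnit_det (hM : M.IsLowerTriangular) (hdiag : ∀ i, IsUnit (M i i)) :
    IsUnit M.det := by
  rw [det_of_isLowerTriangular M hM]
  exact IsUnit.prod_univ_iff.2 hdiag

theorem IsLowerTriangular.inv (hM : M.IsLowerTriangular) : M⁻¹.IsLowerTriangular := by
  by_cases hdet : IsUnit M.det
  · have := M.invertibleOfIsUnitDet hdet
    exact blockTriangular_inv_of_blockTriangular hM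
  · rw [nonsing_inv_apply_not_isUnit M hdet]
    exact blockTriangular_zero

theorem IsLowerTriangular.inv_apply_self_mul_apply_self (hM : M.IsLowerTriangular)
    (hdet : IsUnit M.det) (i : m) : M⁻¹ i i * M i i = 1 := by
  calc M⁻¹ i i * M i i = ∑ j, M⁻¹ i j * M j i := by
        symm
        refine Finset.sum_eq_single_of_mem i (Finset.mem_univ i) fun j _ hji => ?_
        rcases hji.lt_or_gt with hlt | hgt
        · rw [hM (show OrderDual.toDual i < OrderDual.toDual j from hlt), mul_zero]
        · rw [hM.inv (show OrderDual.toDual j < OrderDual.toDual i from hgt), zero_mul]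
    _ = 1 := by rw [← mul_apply, nonsing_inv_mul M hdet, one_apply_eq]

theorem IsLowerTriangular.eq_of_mulVec_single_apply_ne_zero (hM : M.IsLowerTriangular)
    {i r : m} {c : R} (h : (M *ᵥ Pi.single i c) r ≠ 0)
    (h' : (M⁻¹ᵀ *ᵥ Pi.single i c) r ≠ 0) : i = r := by
  simp only [mulVec, dotProduct_single] at h h'
  refine le_antisymm (not_lt.1 fun hri => h ?_) (not_lt.1 fun hir => h' ?_)
  · rw [hM (show OrderDual.toDual i < OrderDual.toDual r from hri), zero_mul]
  · rw [transpose_apply, hM.inv (show OrderDual.toDual r < OrderDual.toDual i from hir),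
      zero_mul]

end LowerTriangular

section Acyclic

variable [DecidableEq m] [LinearOrder m] [CommRing R] {B : Matrix m m R} {σ : Equiv.Perm m}

theorem isLowerTriangular_submatrix_one_sub (hB : ∀ i j, i ≤ j → B (σ i) (σ j) = 0) :
    ((1 - B).submatrix σ σ).IsLowerTriangular := fun i j (hij : i < j) => by
  simp [one_apply_ne (σ.injective.ne hij.ne), hB i j hij.le]

theorem one_sub_apply_self (hB : ∀ i j, i ≤ j → B (σ i) (σ j) = 0) (i : m) :
    (1 - B) i i = 1 := by
  simpa using hB (σ.symm i) (σ.symm i) le_rfl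

theorem isUnit_det_one_sub [Fintype m] (hB : ∀ i j, i ≤ j → B (σ i) (σ j) = 0) :
    IsUnit (1 - B).det := by
  rw [← det_submatrix_equiv_self σ]
  refine (isLowerTriangular_submatrix_one_sub hB).isUnit_det fun i => ?_
  simp [one_sub_apply_self hB]

theorem inv_one_sub_apply_self [Fintype m] (hB : ∀ i j, i ≤ j → B (σ i) (σ j) = 0) (i : m) :
    (1 - B)⁻¹ i i = 1 := by
  have h := (isLowerTriangular_submatrix_one_sub hB).inv_apply_self_mul_apply_self
    (by rw [det_submatrix_equiv_self]; exact isUnit_det_one_sub hB) (σ.symm i)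
  simpa [inv_submatrix_equiv, one_sub_apply_self hB] using h

end Acyclic

theorem inv_inv_mul_mul_inv_transpose [Fintype m] [DecidableEq m] [CommRing R]
    {M : Matrix m m R} (hM : IsUnit M.det) (D : Matrix m m R) :
    (M⁻¹ * D * M⁻¹ᵀ)⁻¹ = Mᵀ * D⁻¹ * M := by
  rw [mul_inv_rev, mul_inv_rev, transpose_nonsing_inv, nonsing_inv_nonsing_inv _ hM,
    nonsing_inv_nonsing_inv _ (by rwa [det_transpose]), mul_assoc]

theorem IsDiag.inv_eq_diagonal [Fintype m] [DecidableEq m] [Field K] {D : Matrix m m K}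
    (hD : D.IsDiag) (hdiag : ∀ i, D i i ≠ 0) : D⁻¹ = diagonal fun i => (D i i)⁻¹ := by
  refine inv_eq_left_inv ?_
  conv_lhs => rw [← hD.diagonal_diag]
  rw [diagonal_mul_diagonal, ← diagonal_one]
  exact congrArg diagonal (funext fun i => by simp [inv_mul_cancel₀ (hdiag i)])

end Matrix

theorem Pi.eq_single_of_support_subset_singleton {m R : Type*} [DecidableEq m] [Zero R]
    {ξ : m → R} {i : m} (h : Function.support ξ ⊆ {i}) : ξ = Pi.single i (ξ i) := by
  funext j
  by_cases hj : j = i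
  · subst hj
    simp
  · rw [Pi.single_eq_of_ne hj]
    exact Function.notMem_support.1 fun hs => hj (h hs)

/-- Theorem 1 of the paper (identifiability of the root cause).  `B` becomes
strictly lower triangular after permuting rows and columns by `σ` (so the SEM is
acyclic), `D` is the positive diagonal error covariance,
`Σ = (I - B)⁻¹ D (I - B)⁻ᵀ` is the observational covariance and `L` is its
lower triangular Cholesky factor with positive diagonal.  For a root cause `r`
and intervention strength `δ ≠ 0`, the vector `ξ = L⁻¹ (I - B)⁻¹ (δ • e_r)`
(a) is nonzero, and (b) if it has exactly one nonzero coordinate, then that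
coordinate is the `r`-th one. -/
theorem root_cause_identifiability
    {p : ℕ} (B D L : Matrix (Fin p) (Fin p) ℝ)
    (σ : Equiv.Perm (Fin p))
    (hB : ∀ i j : Fin p, i ≤ j → B (σ i) (σ j) = 0)
    (hDdiag : ∀ i j : Fin p, i ≠ j → D i j = 0)
    (hDpos : ∀ i : Fin p, 0 < D i i)
    (hLtri : ∀ i j : Fin p, i < j → L i j = 0)
    (hLdiag : ∀ i : Fin p, 0 < L i i)
    (hLL : L * Lᵀ = (1 - B)⁻¹ * D * ((1 - B)⁻¹)ᵀ)
    (r : Fin p) (δ : ℝ) (hδ : δ ≠ 0)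
    (ξ : Fin p → ℝ)
    (hξ : ξ = (L⁻¹ * (1 - B)⁻¹).mulVec (δ • (Pi.single r 1 : Fin p → ℝ))) :
    ξ ≠ 0 ∧
      ((∃! i : Fin p, ξ i ≠ 0) → (ξ r ≠ 0 ∧ ∀ j : Fin p, j ≠ r → ξ j = 0)) := by
  have hLlow : L.IsLowerTriangular := fun i j hij => hLtri i j hij
  have hL : IsUnit L.det := hLlow.isUnit_det fun i => (hLdiag i).ne'.isUnit
  have hM : IsUnit (1 - B).det := isUnit_det_one_sub hB
  have hLξ : (L *ᵥ ξ) r = δ := by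
    rw [hξ, mulVec_mulVec, ← mul_assoc, mul_nonsing_inv L hL, one_mul, mulVec_smul,
      mulVec_single_one]
    simp [inv_one_sub_apply_self hB]
  have hLinvξ : (L⁻¹ᵀ *ᵥ ξ) r = δ * (D r r)⁻¹ := by
    rw [hξ, mulVec_mulVec, ← mul_assoc, transpose_nonsing_inv, ← Matrix.mul_inv_rev, hLL,
      inv_inv_mul_mul_inv_transpose hM, mul_assoc, mul_nonsing_inv _ hM, mul_one, mulVec_smul,
      mulVec_single_one, IsDiag.inv_eq_diagonal hDdiag fun i => (hDpos i).ne', Pi.smul_apply,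
      col_apply, mul_diagonal, transpose_apply, one_sub_apply_self hB, one_mul, smul_eq_mul]
  refine ⟨fun h0 => hδ (by simpa [h0] using hLξ.symm), fun ⟨i, hi, huniq⟩ => ?_⟩
  have hsingle : ξ = Pi.single i (ξ i) := Pi.eq_single_of_support_subset_singleton huniq
  have hir : i = r := hLlow.eq_of_mulVec_single_apply_ne_zero (c := ξ i)
    (by rw [← hsingle, hLξ]; exact hδ)
    (by rw [← hsingle, hLinvξ]; exact mul_ne_zero hδ (inv_ne_zero (hDpos r).ne'))
  subst hir
  exact ⟨hi, fun j hj => by rw [hsingle, Pi.single_eq_of_ne hj]⟩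
end

section
/- Let A be an invertible real p×p matrix such that P A Pᵀ is lower triangular for some permutation matrix P, and let L be a lower triangular matrix with strictly positive diagonal entries satisfying L Lᵀ = A Aᵀ. Fix an index j. If (i) A_{kj} = 0 for all k < j, and (ii) (A⁻¹)_{jk} = 0 for all k > j, then the j-th column of L⁻¹ A has exactly one nonzero entry, located in position j; indeed (L⁻¹ A)_{jj} = (L⁻¹)_{jj} · A_{jj} ≠ 0 and (L⁻¹ A)_{ij} = 0 for every i ≠ j. -/
open Matrix

/-!
`L` is invertible because `(det L)² = (det A)²`, and `Q := L⁻¹ * A` is orthogonal, since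
`Q * Qᵀ = L⁻¹ (A Aᵀ) L⁻ᵀ = L⁻¹ (L Lᵀ) L⁻ᵀ = 1`.
Above the diagonal, column `j` of `Q` vanishes because `L⁻¹` is lower triangular and column `j`
of `A` vanishes above `j`. Below the diagonal, use `Qᵀ = Q⁻¹ = A⁻¹ * L`: row `j` of `A⁻¹` vanishes
beyond `j` and `L` is lower triangular. A column of an orthogonal matrix is a unit vector, so the
one remaining entry `Q j j` is nonzero.
-/

namespace Matrix

variable {n R : Type*} [Fintype n] [CommRing R]

section Inverse

variable [DecidableEq n]

theorem isUnit_det_of_mul_transpose_eq {A L : Matrix n n R} (hA : IsUnit A.det)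
    (h : L * Lᵀ = A * Aᵀ) : IsUnit L.det := by
  have hLL : IsUnit (L.det * L.det) := by
    have := congrArg det h
    rw [det_mul, det_mul, det_transpose, det_transpose] at this
    exact this ▸ hA.mul hA
  exact isUnit_of_mul_isUnit_left hLL

theorem inv_mul_mul_transpose_eq_one {A L : Matrix n n R} (hL : IsUnit L.det)
    (h : L * Lᵀ = A * Aᵀ) : L⁻¹ * A * (L⁻¹ * A)ᵀ = 1 := by
  have hLt : IsUnit Lᵀ.det := by rwa [det_transpose]
  calc L⁻¹ * A * (L⁻¹ * A)ᵀ = L⁻¹ * (A * Aᵀ) * Lᵀ⁻¹ := by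
        rw [transpose_mul, transpose_nonsing_inv]; noncomm_ring
    _ = 1 := by
        rw [← h, ← Matrix.mul_assoc, nonsing_inv_mul _ hL, Matrix.one_mul, mul_nonsing_inv _ hLt]

theorem transpose_inv_mul_eq {A L : Matrix n n R} (hL : IsUnit L.det)
    (h : L * Lᵀ = A * Aᵀ) : (L⁻¹ * A)ᵀ = A⁻¹ * L := by
  rw [← inv_eq_right_inv (inv_mul_mul_transpose_eq_one hL h), mul_inv_rev,
    nonsing_inv_nonsing_inv _ hL]

theorem apply_self_ne_zero_of_transpose_mul_self_eq_one [Nontrivial R] {Q : Matrix n n R}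
    (hQ : Qᵀ * Q = 1) {j : n} (hcol : ∀ i, i ≠ j → Q i j = 0) : Q j j ≠ 0 := by
  intro hjj
  have : (Qᵀ * Q) j j = 0 := by
    rw [mul_apply]
    exact Finset.sum_eq_zero fun k _ => by
      rcases eq_or_ne k j with rfl | hk
      · rw [hjj, mul_zero]
      · rw [hcol k hk, mul_zero]
  simp [hQ] at this

end Inverse

variable [LinearOrder n] {M B : Matrix n n R} {i j : n}

theorem IsLowerTriangular.mul_apply_eq_zero_of_col (hM : M.IsLowerTriangular)
    (hB : ∀ k, k < j → B k j = 0) (hij : i < j) : (M * B) i j = 0 := by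
  rw [mul_apply]
  exact Finset.sum_eq_zero fun k _ => by
    rcases lt_or_ge k j with hk | hk
    · rw [hB k hk, mul_zero]
    · rw [hM (hij.trans_le hk), zero_mul]

theorem IsLowerTriangular.mul_apply_self_of_col (hM : M.IsLowerTriangular)
    (hB : ∀ k, k < j → B k j = 0) : (M * B) j j = M j j * B j j := by
  rw [mul_apply]
  exact Finset.sum_eq_single j (fun k _ hkj => by
    rcases hkj.lt_or_gt with hk | hk
    · rw [hB k hk, mul_zero]
    · rw [hM hk, zero_mul]) (by simp)

theorem IsLowerTriangular.mul_apply_eq_zero_of_row (hM : M.IsLowerTriangular)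
    (hB : ∀ k, j < k → B j k = 0) (hji : j < i) : (B * M) j i = 0 := by
  rw [mul_apply]
  exact Finset.sum_eq_zero fun k _ => by
    rcases lt_or_ge j k with hk | hk
    · rw [hB k hk, zero_mul]
    · rw [hM (hk.trans_lt hji), mul_zero]

end Matrix

theorem column_one_sparse_of_conditions_general
    {p : ℕ} (A L : Matrix (Fin p) (Fin p) ℝ)
    (hA : IsUnit A)
    (hLtri : ∀ i j : Fin p, i < j → L i j = 0)
    (hLL : L * Lᵀ = A * Aᵀ)
    (j : Fin p)
    (h1 : ∀ k : Fin p, k < j → A k j = 0)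
    (h2 : ∀ k : Fin p, j < k → A⁻¹ j k = 0) :
    (L⁻¹ * A) j j = L⁻¹ j j * A j j ∧
      (L⁻¹ * A) j j ≠ 0 ∧
      ∀ i : Fin p, i ≠ j → (L⁻¹ * A) i j = 0 := by
  have hLdet : IsUnit L.det :=
    isUnit_det_of_mul_transpose_eq ((isUnit_iff_isUnit_det A).1 hA) hLL
  have hL : L.IsLowerTriangular := fun i k hik => hLtri i k hik
  have hLinv : L⁻¹.IsLowerTriangular :=
    haveI := L.invertibleOfIsUnitDet hLdet
    blockTriangular_inv_of_blockTriangular hL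
  have hcol : ∀ i, i ≠ j → (L⁻¹ * A) i j = 0 := by
    intro i hij
    rcases hij.lt_or_gt with hij | hji
    · exact hLinv.mul_apply_eq_zero_of_col h1 hij
    · rw [← transpose_apply (L⁻¹ * A), transpose_inv_mul_eq hLdet hLL]
      exact hL.mul_apply_eq_zero_of_row h2 hji
  have hQ := mul_eq_one_comm.1 (inv_mul_mul_transpose_eq_one hLdet hLL)
  exact ⟨hLinv.mul_apply_self_of_col h1,
    apply_self_ne_zero_of_transpose_mul_self_eq_one hQ hcol, hcol⟩

/-- Sufficiency part of Lemma D.2 ('OneNoneZeroWRTA') of the paper.  `A` is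
invertible and becomes lower triangular after permuting rows and columns by
`σ`; `L` is the lower triangular Cholesky factor (with positive diagonal) of
`A Aᵀ`.  If `A k j = 0` for all `k < j` and `(A⁻¹) j k = 0` for all `k > j`,
then the `j`-th column of `L⁻¹ A` has exactly one nonzero entry, located at
position `j`, and `(L⁻¹ A) j j = (L⁻¹) j j * A j j`. -/
theorem column_one_sparse_of_conditions
    {p : ℕ} (A L : Matrix (Fin p) (Fin p) ℝ)
    (hA : IsUnit A)
    (σ : Equiv.Perm (Fin p))
    (htri : ∀ i j : Fin p, i < j → A (σ i) (σ j) = 0)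
    (hLtri : ∀ i j : Fin p, i < j → L i j = 0)
    (hLdiag : ∀ i : Fin p, 0 < L i i)
    (hLL : L * Lᵀ = A * Aᵀ)
    (j : Fin p)
    (h1 : ∀ k : Fin p, k < j → A k j = 0)
    (h2 : ∀ k : Fin p, j < k → A⁻¹ j k = 0) :
    (L⁻¹ * A) j j = L⁻¹ j j * A j j ∧
      (L⁻¹ * A) j j ≠ 0 ∧
      ∀ i : Fin p, i ≠ j → (L⁻¹ * A) i j = 0 :=
  column_one_sparse_of_conditions_general A L hA hLtri hLL j h1 h2
end
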